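/- arXiv:1407.5235 — 5 statements merged into one kernel-verified Lean document; each statement's English description precedes it below -/
import Mathlib

section
/- Let G be a finite bipartite simple graph. Then θ_c(G) ≤ α(G), i.e., G admits a neo-colonization of total weight at most the independence number of G. -/
/-!
Parts that are cliques have weight 1, so a partition of `V` into cliques is a neo-colonization
whose weight is its number of parts: `θ_c(G) ≤ θ(G)`. For bipartite `G` with sides `A`, `B`,
König's theorem gives `θ(G) ≤ α(G)`. Put `d = α(G) - |B|`. For `S ⊆ A` the set
`S ∪ (B \ N(S))` is independent, so `|S| ≤ |N(S)| + d`, and Hall's theorem with `d` extra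
vertices matches all but at most `d` vertices of `A` into `B`. The matching edges together with
the remaining vertices are `|B| + d = α(G)` cliques covering `V`.
-/

variable {V : Type*}

/-- `D` is a dominating set of `G`: every vertex outside `D` has a neighbor in `D`. -/
def Dominates (G : SimpleGraph V) (D : Finset V) : Prop :=
  ∀ v : V, v ∉ D → ∃ u ∈ D, G.Adj u v

/-- The domination number `γ(G)`. -/
noncomputable def domNum (G : SimpleGraph V) : ℕ :=
  sInf {k | ∃ D : Finset V, Dominates G D ∧ D.card = k}

/-- An eternal guard family of size `k` in `G`. -/
def IsEternalGuardFamily [DecidableEq V] (G : SimpleGraph V) (k : ℕ)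
    (F : Set (Finset V)) : Prop :=
  F.Nonempty ∧ (∀ D ∈ F, Dominates G D ∧ D.card = k) ∧
    ∀ D ∈ F, ∀ r : V, r ∉ D → ∃ v ∈ D, G.Adj v r ∧ insert r (D.erase v) ∈ F

/-- The eternal domination number `γ^∞(G)`. -/
noncomputable def eternalDomNum [DecidableEq V] (G : SimpleGraph V) : ℕ :=
  sInf {k | 1 ≤ k ∧ ∃ F : Set (Finset V), IsEternalGuardFamily G k F}

/-- An m-eternal guard family of size `k` in `G`. -/
def IsMEternalGuardFamily (G : SimpleGraph V) (k : ℕ) (F : Set (Finset V)) : Prop :=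
  F.Nonempty ∧ (∀ D ∈ F, Dominates G D ∧ D.card = k) ∧
    ∀ D ∈ F, ∀ r : V, r ∉ D → ∃ D' ∈ F, r ∈ D' ∧
      ∃ g : V → V, Set.BijOn g ↑D ↑D' ∧ ∀ v ∈ D, g v = v ∨ G.Adj v (g v)

/-- The m-eternal domination number `γ_m^∞(G)`. -/
noncomputable def mEternalDomNum (G : SimpleGraph V) : ℕ :=
  sInf {k | 1 ≤ k ∧ ∃ F : Set (Finset V), IsMEternalGuardFamily G k F}

/-- `s` is an independent set of vertices of `G`. -/
def IsIndepFinset (G : SimpleGraph V) (s : Finset V) : Prop :=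
  ∀ a ∈ s, ∀ b ∈ s, a ≠ b → ¬ G.Adj a b

/-- The independence number `α(G)`. -/
noncomputable def indepNum (G : SimpleGraph V) : ℕ :=
  sSup {k | ∃ s : Finset V, IsIndepFinset G s ∧ s.card = k}

/-- The clique covering number `θ(G)`: the least `t` such that the vertices can be
partitioned into `t` classes each inducing a complete subgraph. -/
noncomputable def cliqueCoverNum (G : SimpleGraph V) : ℕ :=
  sInf {t | ∃ f : V → Fin t, ∀ a b : V, f a = f b → a ≠ b → G.Adj a b}

/-- The connected domination number `γ_c(G)`. -/
noncomputable def connDomNum (G : SimpleGraph V) : ℕ :=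
  sInf {k | ∃ D : Finset V,
    Dominates G D ∧ (G.induce (↑D : Set V)).Connected ∧ D.card = k}

open scoped Classical in
/-- The weight of a part of a neo-colonization: `1` for a clique,
`1 + γ_c` of the induced subgraph otherwise. -/
noncomputable def partWeight (G : SimpleGraph V) (s : Finset V) : ℕ :=
  if G.IsClique (↑s : Set V) then 1 else 1 + connDomNum (G.induce (↑s : Set V))

/-- `P` is a neo-colonization of `G`: a partition of the vertex set into
parts inducing connected subgraphs. -/
def IsNeoColonization (G : SimpleGraph V) (P : Finset (Finset V)) : Prop :=
  (∀ s ∈ P, s.Nonempty) ∧ (∀ v : V, ∃! s, s ∈ P ∧ v ∈ s) ∧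
    ∀ s ∈ P, (G.induce (↑s : Set V)).Connected

/-- `θ_c(G)`: the minimum weight of a neo-colonization of `G`. -/
noncomputable def thetaC (G : SimpleGraph V) : ℕ :=
  sInf {w | ∃ P : Finset (Finset V), IsNeoColonization G P ∧ ∑ s ∈ P, partWeight G s = w}

open Finset

section CliqueCover

variable {G : SimpleGraph V}

lemma partWeight_of_isClique {s : Finset V} (hs : G.IsClique (s : Set V)) :
    partWeight G s = 1 := by
  rw [partWeight, if_pos hs]

lemma connected_induce_of_isClique {s : Set V} (hs : G.IsClique s) (hne : s.Nonempty) :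
    (G.induce s).Connected := by
  have := hne.to_subtype
  rw [SimpleGraph.induce_eq_top.2 hs]
  exact SimpleGraph.connected_top

lemma thetaC_le_card_of_forall_isClique (P : Finset (Finset V))
    (hne : ∀ s ∈ P, s.Nonempty) (hcover : ∀ v : V, ∃! s, s ∈ P ∧ v ∈ s)
    (hclique : ∀ s ∈ P, G.IsClique (s : Set V)) : thetaC G ≤ #P := by
  have hP : IsNeoColonization G P := ⟨hne, hcover, fun s hs =>
    connected_induce_of_isClique (hclique s hs) (mod_cast hne s hs)⟩
  calc thetaC G ≤ ∑ s ∈ P, partWeight G s := Nat.sInf_le ⟨P, hP, rfl⟩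
    _ = #P := by
      rw [card_eq_sum_ones]
      exact sum_congr rfl fun s hs => partWeight_of_isClique (hclique s hs)

variable [Fintype V]

lemma thetaC_le_cliqueCoverNum : thetaC G ≤ cliqueCoverNum G := by
  classical
  have hcover : {t | ∃ f : V → Fin t, ∀ a b, f a = f b → a ≠ b → G.Adj a b}.Nonempty :=
    ⟨_, Fintype.equivFin V, fun a b hab hne => absurd ((Fintype.equivFin V).injective hab) hne⟩
  obtain ⟨f, hf⟩ := Nat.sInf_mem hcover
  let fiber i : Finset V := univ.filter (f · = i)
  have hfiber {v i} : v ∈ fiber i ↔ f v = i := by simp [fiber]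
  calc thetaC G ≤ #((univ.image fiber).filter (·.Nonempty)) := by
        refine thetaC_le_card_of_forall_isClique _ (fun s hs => (mem_filter.1 hs).2)
          (fun v => ⟨fiber (f v), ?_, ?_⟩) fun s hs => ?_
        · exact ⟨mem_filter.2 ⟨mem_image_of_mem _ (mem_univ _), v, hfiber.2 rfl⟩,
            hfiber.2 rfl⟩
        · rintro s ⟨hs, hvs⟩
          obtain ⟨i, -, rfl⟩ := mem_image.1 (mem_filter.1 hs).1
          rw [hfiber.1 hvs]
        · obtain ⟨i, -, rfl⟩ := mem_image.1 (mem_filter.1 hs).1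
          exact fun a ha b hb => hf a b ((hfiber.1 ha).trans (hfiber.1 hb).symm)
    _ ≤ #(univ.image fiber) := card_filter_le _ _
    _ ≤ cliqueCoverNum G := card_image_le.trans_eq (card_fin _)

lemma cliqueCoverNum_le_card_image {ι : Type*} [DecidableEq ι] (f : V → ι)
    (hf : ∀ a b, f a = f b → a ≠ b → G.Adj a b) : cliqueCoverNum G ≤ #(univ.image f) := by
  let e := (univ.image f).equivFin
  exact Nat.sInf_le ⟨fun v => e ⟨f v, mem_image_of_mem f (mem_univ v)⟩,
    fun a b hab => hf a b (by simpa using hab)⟩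

end CliqueCover

lemma exists_injective_sum_fin_of_forall_card_le_card_biUnion_add {ι α : Type*}
    [DecidableEq α] (t : ι → Finset α) (d : ℕ)
    (h : ∀ s : Finset ι, #s ≤ #(s.biUnion t) + d) :
    ∃ f : ι → α ⊕ Fin d, Function.Injective f ∧ ∀ x a, f x = Sum.inl a → a ∈ t x := by
  -- Hall's theorem, after adding `d` new vertices adjacent to everything in `ι`
  obtain ⟨f, hinj, hmem⟩ :=
    (all_card_le_biUnion_card_iff_exists_injective
      fun x => (t x).disjSum (univ : Finset (Fin d))).1 fun s => by
      rcases s.eq_empty_or_nonempty with rfl | ⟨x₀, hx₀⟩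
      · simp
      calc #s ≤ #((s.biUnion t).disjSum univ) := by simpa using h s
        _ ≤ _ := card_le_card fun z hz => by
          rcases z with a | j
          · obtain ⟨x, hx, ha⟩ := mem_biUnion.1 (inl_mem_disjSum.1 hz)
            exact mem_biUnion.2 ⟨x, hx, inl_mem_disjSum.2 ha⟩
          · exact mem_biUnion.2 ⟨x₀, hx₀, inr_mem_disjSum.2 (mem_univ j)⟩
  exact ⟨f, hinj, fun x a hx => inl_mem_disjSum.1 (hx ▸ hmem x)⟩

section Independence

variable [Fintype V] {G : SimpleGraph V}

lemma card_le_indepNum {s : Finset V} (hs : IsIndepFinset G s) : #s ≤ indepNum G :=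
  le_csSup ⟨Fintype.card V, by rintro k ⟨t, -, rfl⟩; exact t.card_le_univ⟩ ⟨s, hs, rfl⟩

variable [DecidableEq V] [DecidableRel G.Adj]

lemma isIndepFinset_union_sdiff_biUnion_neighborFinset {S T : Finset V}
    (hS : IsIndepFinset G S) (hT : IsIndepFinset G T) :
    IsIndepFinset G (S ∪ (T \ S.biUnion fun a => G.neighborFinset a)) := by
  have hN {a b} (ha : a ∈ S) (hb : b ∈ T \ S.biUnion fun a => G.neighborFinset a) :
      ¬ G.Adj a b :=
    fun hab => (mem_sdiff.1 hb).2 (mem_biUnion.2 ⟨a, ha, (G.mem_neighborFinset a b).2 hab⟩)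
  intro a ha b hb hne
  rcases mem_union.1 ha with ha | ha <;> rcases mem_union.1 hb with hb | hb
  · exact hS a ha b hb hne
  · exact hN ha hb
  · exact fun hab => hN hb ha hab.symm
  · exact hT a (mem_sdiff.1 ha).1 b (mem_sdiff.1 hb).1 hne

lemma card_add_card_le_indepNum_add {S T : Finset V} (hS : IsIndepFinset G S)
    (hT : IsIndepFinset G T) (hST : Disjoint S T) :
    #S + #T ≤ indepNum G + #(S.biUnion fun a => G.neighborFinset a) := by
  have hdisj : Disjoint S (T \ S.biUnion fun a => G.neighborFinset a) :=
    hST.mono_right sdiff_subset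
  have := card_le_indepNum (isIndepFinset_union_sdiff_biUnion_neighborFinset hS hT)
  rw [card_union_of_disjoint hdisj] at this
  have := card_le_card_sdiff_add_card (s := T) (t := S.biUnion fun a => G.neighborFinset a)
  omega

end Independence

lemma isIndepFinset_of_forall_coloring_eq {α : Type*} {G : SimpleGraph V} (c : G.Coloring α)
    {i : α} {s : Finset V} (hs : ∀ v ∈ s, c v = i) : IsIndepFinset G s :=
  fun a ha b hb _ hab => c.valid hab ((hs a ha).trans (hs b hb).symm)

lemma cliqueCoverNum_le_card_add_of_injective [Fintype V] {G : SimpleGraph V}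
    (c : G.Coloring (Fin 2)) {d : ℕ} (f : {a // c a = 0} → V ⊕ Fin d)
    (hinj : Function.Injective f) (hadj : ∀ a b, f a = Sum.inl b → G.Adj a b) :
    cliqueCoverNum G ≤ #(univ.filter (c · = 1)) + d := by
  classical
  have hc {v} (hv : c v ≠ 0) : c v = 1 := by omega
  -- each fiber of `h` is a matched edge, a single vertex of either side, or empty
  let h : V → V ⊕ Fin d := fun v => if hv : c v = 0 then f ⟨v, hv⟩ else .inl v
  calc cliqueCoverNum G ≤ #(univ.image h) := cliqueCoverNum_le_card_image h ?_
    _ ≤ #((univ.filter (c · = 1)).disjSum (univ : Finset (Fin d))) := card_le_card ?_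
    _ = _ := by rw [card_disjSum, card_fin]
  · intro a b hab hne
    by_cases ha : c a = 0 <;> by_cases hb : c b = 0 <;> simp only [h, ha, hb, dif_pos] at hab
    · exact absurd (congrArg Subtype.val (hinj hab)) hne
    · exact hadj _ _ hab
    · exact (hadj _ _ hab.symm).symm
    · exact absurd (Sum.inl_injective hab) hne
  · intro z hz
    obtain ⟨v, -, rfl⟩ := mem_image.1 hz
    by_cases hv : c v = 0
    · simp only [h, dif_pos hv]
      rcases hfv : f ⟨v, hv⟩ with b | j
      · have hb : c b ≠ 0 := fun hb => c.valid (hadj _ _ hfv) (hv.trans hb.symm)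
        exact inl_mem_disjSum.2 (mem_filter.2 ⟨mem_univ _, hc hb⟩)
      · exact inr_mem_disjSum.2 (mem_univ j)
    · simp only [h, dif_neg hv]
      exact inl_mem_disjSum.2 (mem_filter.2 ⟨mem_univ _, hc hv⟩)

lemma cliqueCoverNum_le_indepNum [Fintype V] {G : SimpleGraph V} (hG : G.Colorable 2) :
    cliqueCoverNum G ≤ indepNum G := by
  classical
  obtain ⟨c⟩ := hG
  set B := univ.filter (c · = 1)
  have hBindep : IsIndepFinset G B :=
    isIndepFinset_of_forall_coloring_eq c fun v hv => (mem_filter.1 hv).2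
  have hB := card_le_indepNum hBindep
  have hall (s : Finset {a // c a = 0}) :
      #s ≤ #(s.biUnion fun a => G.neighborFinset a) + (indepNum G - #B) := by
    have := card_add_card_le_indepNum_add (S := s.image Subtype.val) (T := B)
      (isIndepFinset_of_forall_coloring_eq c fun v hv => by
        obtain ⟨a, -, rfl⟩ := mem_image.1 hv; exact a.2)
      hBindep (disjoint_left.2 fun v hv hvB => by
        obtain ⟨a, -, rfl⟩ := mem_image.1 hv
        simp [B, a.2] at hvB)
    rw [card_image_of_injective _ Subtype.val_injective, image_biUnion] at this
    omega
  obtain ⟨f, hinj, hadj⟩ := exists_injective_sum_fin_of_forall_card_le_card_biUnion_add _ _ hall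
  calc cliqueCoverNum G ≤ #B + (indepNum G - #B) :=
        cliqueCoverNum_le_card_add_of_injective c f hinj fun a b hab =>
          (G.mem_neighborFinset _ _).1 (hadj a b hab)
    _ = indepNum G := by omega

theorem stmt0_general [Fintype V] (G : SimpleGraph V) (hbip : G.Colorable 2) :
    thetaC G ≤ indepNum G :=
  thetaC_le_cliqueCoverNum.trans (cliqueCoverNum_le_indepNum hbip)

/-- every finite bipartite graph has a neo-colonization of total weight
at most its independence number, i.e. `θ_c(G) ≤ α(G)`. -/
theorem stmt0 [Fintype V] [DecidableEq V] (G : SimpleGraph V) (hbip : G.Colorable 2) :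
    thetaC G ≤ indepNum G :=
  stmt0_general G hbip
end

section
/- Let G be a finite simple graph that is not complete. If every vertex of G is contained in a dominating set of size 2, then γ_m^∞(G) = 2. -/
/-!
Every vertex lies in some set of an m-eternal guard family, so with at most one guard every
vertex would be universal; in a non-complete graph this fails, hence `γ_m^∞(G) ≥ 2`.
Conversely, the family of all dominating pairs is an m-eternal guard family: between any two
dominating pairs `{u, v}` and `{r, w}` the guards can always move in one step, since either
`u` reaches `r` and `v` reaches `w` (reaching meaning equal or adjacent), or `u` reaches `w`
and `v` reaches `r`.
-/

variable {V : Type*}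

open Finset

lemma Set.bijOn_pair_ite [DecidableEq V] {u v r w : V} (huv : u ≠ v) (hrw : r ≠ w) :
    Set.BijOn (fun x => if x = u then r else w) {u, v} {r, w} := by
  have hinj : Set.InjOn (fun x => if x = u then r else w) {u, v} :=
    Set.injOn_pair.2 (by simp [huv.symm, hrw])
  simpa [Set.image_pair, huv.symm] using hinj.bijOn_image

lemma Dominates.eq_or_adj_of_pair [DecidableEq V] {G : SimpleGraph V} {u v : V}
    (hD : Dominates G {u, v}) (y : V) :
    (y = u ∨ G.Adj u y) ∨ (y = v ∨ G.Adj v y) := by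
  by_cases hy : y ∈ ({u, v} : Finset V)
  · simp only [mem_insert, mem_singleton] at hy
    tauto
  · obtain ⟨p, hp, hpy⟩ := hD y hy
    simp only [mem_insert, mem_singleton] at hp
    rcases hp with rfl | rfl <;> tauto

lemma Dominates.exists_guardMove {G : SimpleGraph V} {D D' : Finset V}
    (hD : Dominates G D) (hD2 : D.card = 2) (hD' : Dominates G D') (hD'2 : D'.card = 2) :
    ∃ g : V → V, Set.BijOn g ↑D ↑D' ∧ ∀ v ∈ D, g v = v ∨ G.Adj v (g v) := by
  classical
  obtain ⟨u, v, huv, rfl⟩ := card_eq_two.mp hD2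
  obtain ⟨r, w, hrw, rfl⟩ := card_eq_two.mp hD'2
  have hr := hD.eq_or_adj_of_pair r
  have hw := hD.eq_or_adj_of_pair w
  have hsymm : ∀ {x y : V}, (x = y ∨ G.Adj y x) → (y = x ∨ G.Adj x y) :=
    Or.imp Eq.symm SimpleGraph.Adj.symm
  have hu := (hD'.eq_or_adj_of_pair u).imp hsymm hsymm
  have hv := (hD'.eq_or_adj_of_pair v).imp hsymm hsymm
  have hmove : ((r = u ∨ G.Adj u r) ∧ (w = v ∨ G.Adj v w)) ∨
      ((w = u ∨ G.Adj u w) ∧ (r = v ∨ G.Adj v r)) := by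
    by_cases hur : r = u ∨ G.Adj u r
    · by_cases hvw : w = v ∨ G.Adj v w
      · exact Or.inl ⟨hur, hvw⟩
      · exact Or.inr ⟨hw.resolve_right hvw, hv.resolve_right hvw⟩
    · exact Or.inr ⟨hu.resolve_left hur, hr.resolve_left hur⟩
  rcases hmove with ⟨hur, hvw⟩ | ⟨huw, hvr⟩
  · refine ⟨_, by simpa using Set.bijOn_pair_ite huv hrw, ?_⟩
    simp [huv.symm, hur, hvw]
  · refine ⟨_, by simpa [Set.pair_comm] using Set.bijOn_pair_ite huv hrw.symm, ?_⟩
    simp [huv.symm, huw, hvr]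

lemma isMEternalGuardFamily_dominatingPairs [Nonempty V] {G : SimpleGraph V}
    (h : ∀ v : V, ∃ D : Finset V, Dominates G D ∧ D.card = 2 ∧ v ∈ D) :
    IsMEternalGuardFamily G 2 {D : Finset V | Dominates G D ∧ D.card = 2} := by
  refine ⟨?_, fun D hD => hD, ?_⟩
  · obtain ⟨D, hD, hD2, -⟩ := h (Classical.arbitrary V)
    exact ⟨D, hD, hD2⟩
  · rintro D ⟨hD, hD2⟩ r -
    obtain ⟨D', hD', hD'2, hr⟩ := h r
    exact ⟨D', ⟨hD', hD'2⟩, hr, hD.exists_guardMove hD2 hD' hD'2⟩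

lemma IsMEternalGuardFamily.exists_mem {G : SimpleGraph V} {k : ℕ} {F : Set (Finset V)}
    (hF : IsMEternalGuardFamily G k F) (v : V) : ∃ D ∈ F, v ∈ D := by
  obtain ⟨⟨D, hD⟩, -, hmove⟩ := hF
  by_cases hv : v ∈ D
  · exact ⟨D, hD, hv⟩
  · obtain ⟨D', hD', hvD', -⟩ := hmove D hD v hv
    exact ⟨D', hD', hvD'⟩

lemma IsMEternalGuardFamily.two_le_of_not_adj {G : SimpleGraph V} {k : ℕ}
    {F : Set (Finset V)} (hF : IsMEternalGuardFamily G k F) {a b : V} (hab : a ≠ b)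
    (hnadj : ¬ G.Adj a b) : 2 ≤ k := by
  by_contra! hlt
  obtain ⟨D, hDF, haD⟩ := hF.exists_mem a
  obtain ⟨hD, hDk⟩ := hF.2.1 D hDF
  have hD1 := card_le_one.mp (show D.card ≤ 1 by omega)
  obtain ⟨p, hpD, hpb⟩ := hD b fun hbD => hab (hD1 a haD b hbD)
  exact hnadj (hD1 p hpD a haD ▸ hpb)

theorem stmt3_general (G : SimpleGraph V)
    (hnc : ∃ a b : V, a ≠ b ∧ ¬ G.Adj a b)
    (h : ∀ v : V, ∃ D : Finset V, Dominates G D ∧ D.card = 2 ∧ v ∈ D) :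
    mEternalDomNum G = 2 := by
  obtain ⟨a, b, hab, hnadj⟩ := hnc
  have : Nonempty V := ⟨a⟩
  have h2 : 2 ∈ {k | 1 ≤ k ∧ ∃ F : Set (Finset V), IsMEternalGuardFamily G k F} :=
    ⟨one_le_two, _, isMEternalGuardFamily_dominatingPairs h⟩
  refine le_antisymm (Nat.sInf_le h2) (le_csInf ⟨2, h2⟩ ?_)
  rintro k ⟨-, F, hF⟩
  exact hF.two_le_of_not_adj hab hnadj

/-- if `G` is not complete and every vertex of `G` lies in a
dominating set of size `2`, then `γ_m^∞(G) = 2`. -/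
theorem stmt3 [Fintype V] [DecidableEq V] (G : SimpleGraph V)
    (hnc : ∃ a b : V, a ≠ b ∧ ¬ G.Adj a b)
    (h : ∀ v : V, ∃ D : Finset V, Dominates G D ∧ D.card = 2 ∧ v ∈ D) :
    mEternalDomNum G = 2 :=
  stmt3_general G hnc h
end

section
/- Let G be a finite simple graph with independence number α(G) = 3. If G has a vertex v such that every vertex of every maximum independent set of G lies in the closed neighborhood N[v] of v, then γ_m^∞(G) = 2. -/
/-! Write `W = V ∖ N[v]`, the `Gᶜ`-neighbourhood of `v`. Since `α(G) = 3` and every maximum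
independent set lies in `N[v]`, no vertex of `W` lies in an independent triple: the
non-neighbours of each `w ∈ W` form a clique. In particular `W` is a clique.

Two guards then defend `G` m-eternally from the positions `{y, w}` with `w ∈ W` and `y` a
non-neighbour of `w` (dominating, as the non-neighbours of `w` form a clique), and `{v, x}`
with `x` dominating `W`: a case analysis on the attacked vertex moves both guards into another
such position. One guard never suffices, since `G` is not complete. -/

variable {V : Type*}

def IsGuardMove (G : SimpleGraph V) (D D' : Finset V) : Prop :=
  ∃ g : V → V, Set.BijOn g ↑D ↑D' ∧ ∀ v ∈ D, g v = v ∨ G.Adj v (g v)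

lemma isGuardMove_pair [DecidableEq V] {G : SimpleGraph V} {p q p' q' : V} (hpq : p ≠ q)
    (hpq' : p' ≠ q') (hp : p' = p ∨ G.Adj p p') (hq : q' = q ∨ G.Adj q q') :
    IsGuardMove G {p, q} {p', q'} := by
  set g : V → V := fun z => if z = p then p' else q'
  have hgp : g p = p' := if_pos rfl
  have hgq : g q = q' := if_neg hpq.symm
  refine ⟨g, ?_, ?_⟩
  · have hinj : Set.InjOn g {p, q} := Set.injOn_pair.mpr fun h => absurd (hgp ▸ hgq ▸ h) hpq'
    simpa [Set.image_pair, hgp, hgq] using hinj.bijOn_image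
  · simp only [Finset.mem_insert, Finset.mem_singleton, forall_eq_or_imp, forall_eq, hgp, hgq]
    exact ⟨hp, hq⟩

lemma dominates_pair {G : SimpleGraph V} [DecidableEq V] {p q : V}
    (h : ∀ u, u ≠ p → u ≠ q → G.Adj p u ∨ G.Adj q u) : Dominates G {p, q} := by
  intro u hu
  simp only [Finset.mem_insert, Finset.mem_singleton, not_or] at hu
  rcases h u hu.1 hu.2 with h | h
  · exact ⟨p, by simp, h⟩
  · exact ⟨q, by simp, h⟩

lemma eq_or_adj_of_not_compl_adj {G : SimpleGraph V} {a b : V} (h : ¬Gᶜ.Adj a b) :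
    b = a ∨ G.Adj a b := by
  rw [G.compl_adj, not_and_or, not_not, not_not] at h
  exact h.imp Eq.symm id

lemma adj_of_not_compl_adj {G : SimpleGraph V} {a b : V} (hab : a ≠ b) (h : ¬Gᶜ.Adj a b) :
    G.Adj a b :=
  (eq_or_adj_of_not_compl_adj h).resolve_left hab.symm

lemma isClique_compl_neighborSet {G : SimpleGraph V} {v : V}
    (hW : ∀ w, Gᶜ.Adj v w → G.IsClique (Gᶜ.neighborSet w)) :
    G.IsClique (Gᶜ.neighborSet v) := by
  intro w hw w' hw' hne
  obtain ⟨hvw', hnadj'⟩ := (G.compl_adj v w').mp hw'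
  by_contra hnadj
  exact hnadj' (hW w hw (hw.symm : Gᶜ.Adj w v) ((G.compl_adj w w').mpr ⟨hne, hnadj⟩) hvw')

def guardFamily [DecidableEq V] (G : SimpleGraph V) (v : V) : Set (Finset V) :=
  {D | (∃ y w, Gᶜ.Adj v w ∧ Gᶜ.Adj w y ∧ D = {y, w}) ∨
    ∃ x, x ≠ v ∧ (∀ w, Gᶜ.Adj v w → ¬Gᶜ.Adj x w) ∧ D = {v, x}}

section guardFamily

variable [DecidableEq V] {G : SimpleGraph V} {v : V}

lemma pair_mem_guardFamily_of_compl_adj {y w : V} (hvw : Gᶜ.Adj v w) (hwy : Gᶜ.Adj w y) :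
    {y, w} ∈ guardFamily G v :=
  Or.inl ⟨y, w, hvw, hwy, rfl⟩

lemma pair_mem_guardFamily_of_dominates {x : V} (hxv : x ≠ v)
    (hx : ∀ w, Gᶜ.Adj v w → ¬Gᶜ.Adj x w) : {v, x} ∈ guardFamily G v :=
  Or.inr ⟨x, hxv, hx, rfl⟩

lemma dominates_of_mem_guardFamily
    (hW : ∀ w, Gᶜ.Adj v w → G.IsClique (Gᶜ.neighborSet w)) {D : Finset V}
    (hD : D ∈ guardFamily G v) : Dominates G D ∧ D.card = 2 := by
  rcases hD with ⟨y, w, hvw, hwy, rfl⟩ | ⟨x, hxv, hx, rfl⟩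
  · refine ⟨dominates_pair fun u huy huw => ?_, Finset.card_pair hwy.ne.symm⟩
    by_contra! h
    have hwu : Gᶜ.Adj w u := (G.compl_adj w u).mpr ⟨huw.symm, fun h' => h.2 h'⟩
    exact h.1 (hW w hvw hwy hwu huy.symm)
  · refine ⟨dominates_pair fun u huv hux => ?_, Finset.card_pair hxv.symm⟩
    by_contra! h
    have hvu : Gᶜ.Adj v u := (G.compl_adj v u).mpr ⟨huv.symm, h.1⟩
    exact hx u hvu ((G.compl_adj x u).mpr ⟨hux.symm, h.2⟩)

lemma exists_guardMove_of_compl_adj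
    (hW : ∀ w, Gᶜ.Adj v w → G.IsClique (Gᶜ.neighborSet w)) {y w r : V}
    (hvw : Gᶜ.Adj v w) (hwy : Gᶜ.Adj w y) (hry : r ≠ y) (hrw : r ≠ w) :
    ∃ D' ∈ guardFamily G v, r ∈ D' ∧ IsGuardMove G {y, w} D' := by
  have hyw : y ≠ w := hwy.ne.symm
  by_cases hwr : Gᶜ.Adj w r
  · have hyr : G.Adj y r := hW w hvw hwy hwr hry.symm
    exact ⟨{r, w}, pair_mem_guardFamily_of_compl_adj hvw hwr, by simp,
      isGuardMove_pair hyw hrw (Or.inr hyr) (Or.inl rfl)⟩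
  have hwr : G.Adj w r := adj_of_not_compl_adj hrw.symm hwr
  by_cases hr : ∀ w', Gᶜ.Adj v w' → ¬Gᶜ.Adj r w'
  · have hrv : r ≠ v := by
      rintro rfl
      exact hr w hvw hvw
    have hvy : v = y ∨ G.Adj y v := by
      by_cases hvy : v = y
      · exact Or.inl hvy
      · exact Or.inr (hW w hvw (hvw.symm : Gᶜ.Adj w v) hwy hvy).symm
    exact ⟨{v, r}, pair_mem_guardFamily_of_dominates hrv hr, by simp,
      isGuardMove_pair hyw hrv.symm hvy (Or.inr hwr)⟩
  push Not at hr
  obtain ⟨w', hvw', hrw'⟩ := hr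
  have hww' : G.Adj w w' := by
    refine isClique_compl_neighborSet hW hvw hvw' ?_
    rintro rfl
    exact ((G.compl_adj r w).mp hrw').2 hwr.symm
  have hyw' : y ≠ w' := by
    rintro rfl
    exact ((G.compl_adj w y).mp hwy).2 hww'
  have hmem : {r, w'} ∈ guardFamily G v := pair_mem_guardFamily_of_compl_adj hvw' hrw'.symm
  by_cases hyw'' : G.Adj y w'
  · refine ⟨{r, w'}, hmem, by simp, ?_⟩
    rw [Finset.pair_comm r w']
    exact isGuardMove_pair hyw hrw'.ne.symm (Or.inr hyw'') (Or.inr hwr)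
  · have hyr : G.Adj y r :=
      hW w' hvw' ((G.compl_adj w' y).mpr ⟨hyw'.symm, fun h => hyw'' h.symm⟩) hrw'.symm hry.symm
    exact ⟨{r, w'}, hmem, by simp, isGuardMove_pair hyw hrw'.ne (Or.inr hyr) (Or.inr hww')⟩

lemma exists_guardMove_of_dominates
    (hW : ∀ w, Gᶜ.Adj v w → G.IsClique (Gᶜ.neighborSet w)) {x r : V} (hxv : x ≠ v)
    (hx : ∀ w, Gᶜ.Adj v w → ¬Gᶜ.Adj x w) (hrv : r ≠ v) (hrx : r ≠ x) :
    ∃ D' ∈ guardFamily G v, r ∈ D' ∧ IsGuardMove G {v, x} D' := by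
  by_cases hvx : Gᶜ.Adj v x
  · exact exists_guardMove_of_compl_adj hW hvx hvx.symm hrv hrx
  have hvx : G.Adj v x := adj_of_not_compl_adj hxv.symm hvx
  by_cases hvr : Gᶜ.Adj v r
  · exact ⟨{v, r}, pair_mem_guardFamily_of_compl_adj hvr hvr.symm, by simp,
      isGuardMove_pair hxv.symm hrv.symm (Or.inl rfl)
        (Or.inr (adj_of_not_compl_adj hrx.symm (hx r hvr)))⟩
  have hvr : G.Adj v r := adj_of_not_compl_adj hrv.symm hvr
  by_cases hr : ∀ w', Gᶜ.Adj v w' → ¬Gᶜ.Adj r w'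
  · refine ⟨{v, r}, pair_mem_guardFamily_of_dominates hrv hr, by simp, ?_⟩
    rw [Finset.pair_comm v r]
    exact isGuardMove_pair hxv.symm hrv (Or.inr hvr) (Or.inr hvx.symm)
  push Not at hr
  obtain ⟨w', hvw', hrw'⟩ := hr
  exact ⟨{r, w'}, pair_mem_guardFamily_of_compl_adj hvw' hrw'.symm, by simp,
    isGuardMove_pair hxv.symm hrw'.ne (Or.inr hvr)
      (eq_or_adj_of_not_compl_adj (hx w' hvw'))⟩

theorem isMEternalGuardFamily_guardFamily [Nontrivial V]
    (hW : ∀ w, Gᶜ.Adj v w → G.IsClique (Gᶜ.neighborSet w)) :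
    IsMEternalGuardFamily G 2 (guardFamily G v) := by
  refine ⟨?_, fun D hD => dominates_of_mem_guardFamily hW hD, ?_⟩
  · obtain ⟨x, hxv⟩ := exists_ne v
    by_cases hx : ∀ w, Gᶜ.Adj v w → ¬Gᶜ.Adj x w
    · exact ⟨_, pair_mem_guardFamily_of_dominates hxv hx⟩
    push Not at hx
    obtain ⟨w, hvw, hxw⟩ := hx
    exact ⟨_, pair_mem_guardFamily_of_compl_adj hvw hxw.symm⟩
  · rintro D (⟨y, w, hvw, hwy, rfl⟩ | ⟨x, hxv, hx, rfl⟩) r hr <;>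
      simp only [Finset.mem_insert, Finset.mem_singleton, not_or] at hr
    · exact exists_guardMove_of_compl_adj hW hvw hwy hr.1 hr.2
    · exact exists_guardMove_of_dominates hW hxv hx hr.1 hr.2

end guardFamily

lemma eq_top_of_isMEternalGuardFamily_one {G : SimpleGraph V} {F : Set (Finset V)}
    (hF : IsMEternalGuardFamily G 1 F) : G = ⊤ := by
  obtain ⟨⟨D, hD⟩, hdom, hmove⟩ := hF
  have hsingleton : ∀ {a}, a ∉ D → ∀ b, b ≠ a → G.Adj a b := by
    intro a ha b hba
    obtain ⟨D', hD', haD', -⟩ := hmove D hD a ha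
    obtain ⟨c, rfl⟩ := Finset.card_eq_one.mp (hdom D' hD').2
    obtain rfl : a = c := Finset.mem_singleton.mp haD'
    obtain ⟨_, hc, hadj⟩ := (hdom _ hD').1 b (by simpa using hba)
    rwa [Finset.mem_singleton.mp hc] at hadj
  obtain ⟨x, rfl⟩ := Finset.card_eq_one.mp (hdom D hD).2
  ext a b
  refine ⟨fun h => h.ne, fun hab => ?_⟩
  by_cases hax : a = x
  · subst hax
    exact (hsingleton (by simpa using hab.symm) a hab).symm
  · exact hsingleton (by simpa using hax) b hab.symm

lemma exists_isIndepFinset_card_eq_indepNum [Fintype V] (G : SimpleGraph V) :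
    ∃ s : Finset V, IsIndepFinset G s ∧ s.card = indepNum G :=
  Nat.sSup_mem (s := {k | ∃ s : Finset V, IsIndepFinset G s ∧ s.card = k})
    ⟨0, ∅, by simp [IsIndepFinset]⟩
    ⟨Fintype.card V, by rintro _ ⟨s, -, rfl⟩; exact s.card_le_univ⟩

lemma isIndepFinset_triple {G : SimpleGraph V} [DecidableEq V] {a b c : V} (hab : ¬G.Adj a b)
    (hac : ¬G.Adj a c) (hbc : ¬G.Adj b c) : IsIndepFinset G {a, b, c} := by
  simp only [IsIndepFinset, Finset.mem_insert, Finset.mem_singleton]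
  rintro x (rfl | rfl | rfl) y (rfl | rfl | rfl) hxy <;> first
    | exact absurd rfl hxy | assumption | exact fun h => ‹¬G.Adj _ _› h.symm

lemma isClique_compl_neighborSet_of_indepNum_eq_three [DecidableEq V] {G : SimpleGraph V}
    (hα : indepNum G = 3) {v : V}
    (hv : ∀ s : Finset V, IsIndepFinset G s → s.card = indepNum G →
      ∀ u ∈ s, u = v ∨ G.Adj v u) {w : V} (hvw : Gᶜ.Adj v w) :
    G.IsClique (Gᶜ.neighborSet w) := by
  intro a ha b hb hab
  by_contra hnab
  obtain ⟨hwa, hwa'⟩ := (G.compl_adj w a).mp ha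
  obtain ⟨hwb, hwb'⟩ := (G.compl_adj w b).mp hb
  have hcard : ({a, b, w} : Finset V).card = indepNum G := by
    rw [hα, Finset.card_eq_three]
    exact ⟨a, b, w, hab, hwa.symm, hwb.symm, rfl⟩
  have hind := isIndepFinset_triple hnab (fun h => hwa' h.symm) (fun h => hwb' h.symm)
  rcases hv _ hind hcard w (by simp) with h | h
  · exact hvw.ne h.symm
  · exact ((G.compl_adj v w).mp hvw).2 h

/-- if `α(G) = 3` and some vertex `v` dominates every vertex of every
maximum independent set, then `γ_m^∞(G) = 2`. -/
theorem stmt4 [Fintype V] [DecidableEq V] (G : SimpleGraph V)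
    (hα : indepNum G = 3) (v : V)
    (hv : ∀ s : Finset V, IsIndepFinset G s → s.card = indepNum G →
      ∀ u ∈ s, u = v ∨ G.Adj v u) :
    mEternalDomNum G = 2 := by
  obtain ⟨s, hs, hcard⟩ := exists_isIndepFinset_card_eq_indepNum G
  obtain ⟨a, b, c, hab, -, -, rfl⟩ := Finset.card_eq_three.mp (hcard.trans hα)
  have hnab : ¬G.Adj a b := hs a (by simp) b (by simp) hab
  have : Nontrivial V := ⟨a, b, hab⟩
  have hmem : 2 ∈ {k | 1 ≤ k ∧ ∃ F : Set (Finset V), IsMEternalGuardFamily G k F} :=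
    ⟨one_le_two, _, isMEternalGuardFamily_guardFamily fun w hvw =>
      isClique_compl_neighborSet_of_indepNum_eq_three hα hv hvw⟩
  refine le_antisymm (Nat.sInf_le hmem) (le_csInf ⟨2, hmem⟩ ?_)
  rintro k ⟨hk, F, hF⟩
  by_contra! hk2
  obtain rfl : k = 1 := by omega
  exact hnab (by simpa [eq_top_of_isMEternalGuardFamily_one hF] using hab)
end

section
/- Let H_0, H_1, ..., H_5 be disjoint complete graphs, each of order at least 1, and let H be the graph obtained from their disjoint union by joining every vertex of H_i to every vertex of H_{i+1 (mod 6)} for i = 0,...,5 (i.e., the blow-up of the 6-cycle C_6 by cliques). Then α(H) = 3 and γ_m^∞(H) = 2. -/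
variable {V : Type*}

/-- The blow-up of the 6-cycle `C₆` by cliques of orders `n 0, …, n 5`:
vertex `i` of `C₆` is replaced by a clique on `Fin (n i)`, and every vertex of the
`i`-th clique is joined to every vertex of the `(i±1 mod 6)`-th clique. -/
def blowupC6 (n : Fin 6 → ℕ) : SimpleGraph (Σ i : Fin 6, Fin (n i)) where
  Adj x y := x ≠ y ∧ (x.1 = y.1 ∨ x.1 + 1 = y.1 ∨ y.1 + 1 = x.1)
  symm := by
    constructor
    rintro x y ⟨h1, h2⟩
    refine ⟨h1.symm, ?_⟩
    rcases h2 with h | h | h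
    · exact Or.inl h.symm
    · exact Or.inr (Or.inr h)
    · exact Or.inr (Or.inl h)
  loopless := by
    constructor
    rintro x ⟨h1, -⟩
    exact h1 rfl

/-!
The vertex classes of `H` project onto `C₆`, and each class is a clique, so an independent set
of `H` projects injectively onto an independent set of `C₆`; this gives `α(H) = α(C₆) = 3`.
Two guards on antipodal classes `i` and `i + 3` dominate `H`, since every class is equal or
adjacent to one of them. When a vertex `r` is attacked, the guard whose class is closest to `r`
moves to `r` and the other guard moves to the class antipodal to `r`, which stays within distance
one of it; so the antipodal pairs form an m-eternal guard family. One guard never suffices, as it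
does not see the antipodal class.
-/

open SimpleGraph (cycleGraph)

section GuardNumbers

variable {G : SimpleGraph V}

theorem indepNum_eq_card {s : Finset V} (hs : IsIndepFinset G s)
    (hmax : ∀ t, IsIndepFinset G t → t.card ≤ s.card) : indepNum G = s.card :=
  IsGreatest.csSup_eq ⟨⟨s, hs, rfl⟩, by rintro _ ⟨t, ht, rfl⟩; exact hmax t ht⟩

theorem mEternalDomNum_eq {k : ℕ} {F : Set (Finset V)} (hk : 1 ≤ k)
    (hF : IsMEternalGuardFamily G k F) (hdom : ∀ D, Dominates G D → k ≤ D.card) :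
    mEternalDomNum G = k := by
  refine le_antisymm (Nat.sInf_le ⟨hk, F, hF⟩) (le_csInf ⟨k, hk, F, hF⟩ ?_)
  rintro m ⟨-, F', ⟨D, hD⟩, hF'dom, -⟩
  obtain ⟨hDdom, rfl⟩ := hF'dom D hD
  exact hdom D hDdom

theorem exists_bijOn_pair_of_moves [DecidableEq V] {a b r c : V} (hab : a ≠ b) (hrc : r ≠ c)
    (ha : r = a ∨ G.Adj a r) (hb : c = b ∨ G.Adj b c) :
    ∃ g : V → V, Set.BijOn g ↑({a, b} : Finset V) ↑({r, c} : Finset V) ∧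
      ∀ v ∈ ({a, b} : Finset V), g v = v ∨ G.Adj v (g v) := by
  refine ⟨fun v => if v = a then r else c, ?_, ?_⟩
  · have hbc : Set.BijOn (fun v => if v = a then r else c) {b} {c} := by
      simp [Set.bijOn_singleton, hab.symm]
    simpa using hbc.insert (a := a) (by simpa using hrc)
  · simp only [Finset.mem_insert, Finset.mem_singleton]
    rintro v (rfl | rfl)
    · simpa using ha
    · simpa [hab.symm] using hb

end GuardNumbers

section CycleSix

theorem card_le_three_of_isIndepFinset_cycleGraph_six (T : Finset (Fin 6))
    (hT : IsIndepFinset (cycleGraph 6) T) : T.card ≤ 3 := by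
  unfold IsIndepFinset at hT
  revert T
  decide

theorem isIndepFinset_cycleGraph_six_even : IsIndepFinset (cycleGraph 6) {0, 2, 4} := by
  unfold IsIndepFinset
  decide

theorem cycleGraph_six_near_or_near_add_three : ∀ i j : Fin 6,
    (j = i ∨ (cycleGraph 6).Adj i j) ∨ (j = i + 3 ∨ (cycleGraph 6).Adj (i + 3) j) := by
  decide

theorem cycleGraph_six_near_add_three : ∀ i j : Fin 6,
    (j = i ∨ (cycleGraph 6).Adj i j) → (j + 3 = i + 3 ∨ (cycleGraph 6).Adj (i + 3) (j + 3)) := by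
  decide

theorem cycleGraph_six_not_near_add_three : ∀ i : Fin 6,
    ¬ (i = i + 3 ∨ (cycleGraph 6).Adj i (i + 3)) := by
  decide

theorem fin_six_add_three_add_three : ∀ i : Fin 6, i + 3 + 3 = i := by
  decide

end CycleSix

namespace blowupC6

variable {n : Fin 6 → ℕ}

theorem adj_iff {x y : Σ i : Fin 6, Fin (n i)} :
    (blowupC6 n).Adj x y ↔ x ≠ y ∧ (x.1 = y.1 ∨ (cycleGraph 6).Adj x.1 y.1) := by
  have hC6 : ∀ i j : Fin 6, (i + 1 = j ∨ j + 1 = i) ↔ (cycleGraph 6).Adj i j := by decide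
  exact and_congr_right fun _ => or_congr_right (hC6 _ _)

theorem eq_or_adj_of_fst {x y : Σ i : Fin 6, Fin (n i)}
    (h : y.1 = x.1 ∨ (cycleGraph 6).Adj x.1 y.1) : y = x ∨ (blowupC6 n).Adj x y := by
  by_cases hxy : y = x
  · exact Or.inl hxy
  · exact Or.inr (adj_iff.mpr ⟨Ne.symm hxy, h.imp_left Eq.symm⟩)

theorem injOn_fst_of_isIndepFinset {s : Finset (Σ i : Fin 6, Fin (n i))}
    (hs : IsIndepFinset (blowupC6 n) s) :
    Set.InjOn Sigma.fst (s : Set (Σ i : Fin 6, Fin (n i))) := by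
  intro x hx y hy h
  by_contra hxy
  exact hs x hx y hy hxy (adj_iff.mpr ⟨hxy, Or.inl h⟩)

theorem isIndepFinset_image_fst {s : Finset (Σ i : Fin 6, Fin (n i))}
    (hs : IsIndepFinset (blowupC6 n) s) : IsIndepFinset (cycleGraph 6) (s.image Sigma.fst) := by
  simp only [IsIndepFinset, Finset.mem_image]
  rintro _ ⟨x, hx, rfl⟩ _ ⟨y, hy, rfl⟩ hne hadj
  have hxy : x ≠ y := fun h => hne (congrArg Sigma.fst h)
  exact hs x hx y hy hxy (adj_iff.mpr ⟨hxy, Or.inr hadj⟩)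

theorem card_le_three_of_isIndepFinset {s : Finset (Σ i : Fin 6, Fin (n i))}
    (hs : IsIndepFinset (blowupC6 n) s) : s.card ≤ 3 := by
  rw [← Finset.card_image_of_injOn (injOn_fst_of_isIndepFinset hs)]
  exact card_le_three_of_isIndepFinset_cycleGraph_six _ (isIndepFinset_image_fst hs)

def vertex (hn : ∀ i, 1 ≤ n i) (i : Fin 6) : Σ i : Fin 6, Fin (n i) :=
  ⟨i, ⟨0, hn i⟩⟩

theorem vertex_injective (hn : ∀ i, 1 ≤ n i) : Function.Injective (vertex hn) :=
  fun _ _ h => congrArg Sigma.fst h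

theorem isIndepFinset_image_vertex (hn : ∀ i, 1 ≤ n i) {T : Finset (Fin 6)}
    (hT : IsIndepFinset (cycleGraph 6) T) : IsIndepFinset (blowupC6 n) (T.image (vertex hn)) := by
  simp only [IsIndepFinset, Finset.mem_image]
  rintro _ ⟨i, hi, rfl⟩ _ ⟨j, hj, rfl⟩ hne hadj
  have hij : i ≠ j := fun h => hne (h ▸ rfl)
  obtain ⟨-, h | h⟩ := adj_iff.mp hadj
  · exact hij h
  · exact hT i hi j hj hij h

theorem indepNum_eq_three (hn : ∀ i, 1 ≤ n i) : indepNum (blowupC6 n) = 3 := by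
  have hcard : (({0, 2, 4} : Finset (Fin 6)).image (vertex hn)).card = 3 := by
    rw [Finset.card_image_of_injective _ (vertex_injective hn)]
    rfl
  rw [← hcard]
  exact indepNum_eq_card (isIndepFinset_image_vertex hn isIndepFinset_cycleGraph_six_even)
    fun t ht => hcard ▸ card_le_three_of_isIndepFinset ht

def antipodalPairs (n : Fin 6 → ℕ) : Set (Finset (Σ i : Fin 6, Fin (n i))) :=
  {D | ∃ a b, b.1 = a.1 + 3 ∧ D = {a, b}}

theorem ne_of_fst_eq_add_three {a b : Σ i : Fin 6, Fin (n i)} (hb : b.1 = a.1 + 3) : a ≠ b :=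
  fun h => cycleGraph_six_not_near_add_three a.1 (Or.inl ((congrArg Sigma.fst h).trans hb))

theorem dominates_pair {a b : Σ i : Fin 6, Fin (n i)} (hb : b.1 = a.1 + 3) :
    Dominates (blowupC6 n) {a, b} := by
  intro v hv
  simp only [Finset.mem_insert, Finset.mem_singleton, not_or] at hv
  rcases cycleGraph_six_near_or_near_add_three a.1 v.1 with h | h
  · exact ⟨a, by simp, (eq_or_adj_of_fst h).resolve_left hv.1⟩
  · rw [← hb] at h
    exact ⟨b, by simp, (eq_or_adj_of_fst h).resolve_left hv.2⟩

theorem exists_move_of_near (hn : ∀ i, 1 ≤ n i) {a b r : Σ i : Fin 6, Fin (n i)}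
    (hb : b.1 = a.1 + 3) (hr : r.1 = a.1 ∨ (cycleGraph 6).Adj a.1 r.1) :
    ∃ D' ∈ antipodalPairs n, r ∈ D' ∧ ∃ g : (Σ i : Fin 6, Fin (n i)) → Σ i : Fin 6, Fin (n i),
      Set.BijOn g ↑({a, b} : Finset _) ↑D' ∧
        ∀ v ∈ ({a, b} : Finset _), g v = v ∨ (blowupC6 n).Adj v (g v) := by
  set c := vertex hn (r.1 + 3)
  have hc : c.1 = r.1 + 3 := rfl
  have hcb : c.1 = b.1 ∨ (cycleGraph 6).Adj b.1 c.1 := by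
    rw [hc, hb]
    exact cycleGraph_six_near_add_three _ _ hr
  obtain ⟨g, hg, hmove⟩ := exists_bijOn_pair_of_moves (ne_of_fst_eq_add_three hb)
    (ne_of_fst_eq_add_three hc) (eq_or_adj_of_fst hr) (eq_or_adj_of_fst hcb)
  exact ⟨{r, c}, ⟨r, c, hc, rfl⟩, by simp, g, hg, hmove⟩

theorem isMEternalGuardFamily_antipodalPairs (hn : ∀ i, 1 ≤ n i) :
    IsMEternalGuardFamily (blowupC6 n) 2 (antipodalPairs n) := by
  refine ⟨⟨_, vertex hn 0, vertex hn 3, rfl, rfl⟩, ?_, ?_⟩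
  · rintro _ ⟨a, b, hb, rfl⟩
    exact ⟨dominates_pair hb, Finset.card_pair (ne_of_fst_eq_add_three hb)⟩
  · rintro _ ⟨a, b, hb, rfl⟩ r -
    rcases cycleGraph_six_near_or_near_add_three a.1 r.1 with h | h
    · exact exists_move_of_near hn hb h
    · rw [Finset.pair_comm]
      rw [← hb] at h
      exact exists_move_of_near hn (by rw [hb, fin_six_add_three_add_three]) h

theorem two_le_card_of_dominates (hn : ∀ i, 1 ≤ n i) {D : Finset (Σ i : Fin 6, Fin (n i))}
    (hD : Dominates (blowupC6 n) D) : 2 ≤ D.card := by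
  by_contra! hlt
  have : Nonempty (Σ i : Fin 6, Fin (n i)) := ⟨vertex hn 0⟩
  obtain ⟨a, ha⟩ := Finset.card_le_one_iff_subset_singleton.mp (Nat.le_of_lt_succ hlt)
  set v := vertex hn (a.1 + 3)
  have hv : v.1 = a.1 + 3 := rfl
  have hvD : v ∉ D := fun h => ne_of_fst_eq_add_three hv (Finset.mem_singleton.mp (ha h)).symm
  obtain ⟨u, hu, hadj⟩ := hD v hvD
  obtain rfl := Finset.mem_singleton.mp (ha hu)
  have hnear := (adj_iff.mp hadj).2
  rw [hv] at hnear
  exact cycleGraph_six_not_near_add_three u.1 hnear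

end blowupC6

/-- for the blow-up `H` of `C₆` by nonempty cliques,
`α(H) = 3` and `γ_m^∞(H) = 2`. -/
theorem stmt6 (n : Fin 6 → ℕ) (hn : ∀ i, 1 ≤ n i) :
    indepNum (blowupC6 n) = 3 ∧ mEternalDomNum (blowupC6 n) = 2 :=
  ⟨blowupC6.indepNum_eq_three hn,
    mEternalDomNum_eq one_le_two (blowupC6.isMEternalGuardFamily_antipodalPairs hn)
      fun _ => blowupC6.two_le_card_of_dominates hn⟩
end

section
/- Let G be a finite bipartite simple graph without isolated vertices, and let n = |V(G)|. Then γ(G) = γ^∞(G) if and only if γ(G) = n/2 (equivalently, 2·γ(G) = n). -/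
variable {V : Type*}

/-!
Let `A`, `Aᶜ` be the two colour classes. Without isolated vertices each class dominates, so
`2γ ≤ n`. Attacking the vertices of an independent set one at a time forces any eternal guard
family to contain a configuration covering it, so each class has at most `γ^∞` vertices and
`n ≤ 2γ^∞`. Conversely, if `2γ = n`, then for `S ⊆ A` the set `(A \ S) ∪ N(S)` dominates, whence
`|S| ≤ |N(S)|`. Hall's theorem then gives a perfect matching, and the sets meeting every matching
edge exactly once form an eternal guard family of size `n/2`: an attacked vertex is defended by
its partner.
-/

open Finset Function

variable {G : SimpleGraph V}

lemma IsIndepFinset.not_adj {s : Finset V} (hs : IsIndepFinset G s) {a b : V} (ha : a ∈ s)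
    (hb : b ∈ s) : ¬ G.Adj a b :=
  fun hab => hs a ha b hb hab.ne hab

lemma IsIndepFinset.subset {s t : Finset V} (hs : IsIndepFinset G s) (h : t ⊆ s) :
    IsIndepFinset G t :=
  fun a ha b hb => hs a (h ha) b (h hb)

lemma exists_isIndepFinset_and_compl [Fintype V] [DecidableEq V] (hG : G.Colorable 2) :
    ∃ A : Finset V, IsIndepFinset G A ∧ IsIndepFinset G Aᶜ := by
  obtain ⟨c⟩ := hG
  refine ⟨univ.filter (c · = 0), fun a ha b hb _ hab => ?_, fun a ha b hb _ hab => ?_⟩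
  all_goals simp only [mem_compl, mem_filter, mem_univ, true_and] at ha hb
  · exact c.valid hab (ha.trans hb.symm)
  · exact c.valid hab ((Fin.eq_one_of_ne_zero _ ha).trans (Fin.eq_one_of_ne_zero _ hb).symm)

lemma mem_iff_notMem_of_adj [Fintype V] [DecidableEq V] {A : Finset V} (hA : IsIndepFinset G A)
    (hAc : IsIndepFinset G Aᶜ) {u v : V} (huv : G.Adj u v) : u ∈ A ↔ v ∉ A := by
  constructor
  · exact fun hu hv => hA.not_adj hu hv huv
  · intro hv
    by_contra hu
    exact hAc.not_adj (mem_compl.2 hu) (mem_compl.2 hv) huv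

def openNbhd (G : SimpleGraph V) [Fintype V] [DecidableRel G.Adj] (S : Finset V) : Finset V :=
  univ.filter fun b => ∃ a ∈ S, G.Adj a b

@[simp]
lemma mem_openNbhd [Fintype V] [DecidableRel G.Adj] {S : Finset V} {b : V} :
    b ∈ openNbhd G S ↔ ∃ a ∈ S, G.Adj a b := by
  simp [openNbhd]

@[simp]
lemma openNbhd_empty [Fintype V] [DecidableRel G.Adj] : openNbhd G ∅ = ∅ := by
  ext; simp

lemma openNbhd_mono [Fintype V] [DecidableRel G.Adj] {S T : Finset V} (h : S ⊆ T) :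
    openNbhd G S ⊆ openNbhd G T := by
  intro b
  simp only [mem_openNbhd]
  exact fun ⟨a, ha, hab⟩ => ⟨a, h ha, hab⟩

lemma openNbhd_subset_compl [Fintype V] [DecidableEq V] [DecidableRel G.Adj] {A S : Finset V}
    (hA : IsIndepFinset G A) (hS : S ⊆ A) : openNbhd G S ⊆ Aᶜ := by
  intro b hb
  obtain ⟨a, ha, hab⟩ := mem_openNbhd.1 hb
  exact mem_compl.2 fun hbA => hA.not_adj (hS ha) hbA hab

lemma domNum_le {D : Finset V} (hD : Dominates G D) : domNum G ≤ #D :=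
  Nat.sInf_le ⟨D, hD, rfl⟩

lemma dominates_empty_iff : Dominates G ∅ ↔ IsEmpty V := by
  simp [Dominates, isEmpty_iff]

/-- `A` is a vertex cover, so the vertices of `S` may be traded for their neighbours. -/
lemma dominates_sdiff_union_openNbhd [Fintype V] [DecidableEq V] [DecidableRel G.Adj]
    (hiso : ∀ v : V, ∃ u, G.Adj u v) {A S : Finset V} (hAc : IsIndepFinset G Aᶜ) :
    Dominates G (A \ S ∪ openNbhd G S) := by
  intro v hv
  simp only [mem_union, mem_sdiff, mem_openNbhd, not_or, not_exists, not_and,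
    not_not] at hv
  obtain ⟨u, hu⟩ := hiso v
  by_cases hvS : v ∈ S
  · exact ⟨u, mem_union_right _ (mem_openNbhd.2 ⟨v, hvS, hu.symm⟩), hu⟩
  · have huA : u ∈ A := by
      by_contra huA
      exact hAc.not_adj (mem_compl.2 huA) (mem_compl.2 fun hvA => hvS (hv.1 hvA)) hu
    exact ⟨u, mem_union_left _ (mem_sdiff.2 ⟨huA, fun huS => hv.2 u huS hu⟩), hu⟩

lemma domNum_add_card_le [Fintype V] [DecidableEq V] [DecidableRel G.Adj]
    (hiso : ∀ v : V, ∃ u, G.Adj u v) {A S : Finset V} (hAc : IsIndepFinset G Aᶜ) (hS : S ⊆ A) :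
    domNum G + #S ≤ #A + #(openNbhd G S) :=
  calc domNum G + #S ≤ #(A \ S ∪ openNbhd G S) + #S := by
        gcongr; exact domNum_le (dominates_sdiff_union_openNbhd hiso hAc)
    _ ≤ #(A \ S) + #(openNbhd G S) + #S := by gcongr; exact card_union_le _ _
    _ = #A + #(openNbhd G S) := by rw [← card_sdiff_add_card_eq_card hS]; ring

lemma domNum_le_card [Fintype V] [DecidableEq V] (hiso : ∀ v : V, ∃ u, G.Adj u v)
    {A : Finset V} (hAc : IsIndepFinset G Aᶜ) : domNum G ≤ #A := by
  classical
  simpa using domNum_add_card_le hiso hAc (empty_subset A)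

/-- Hall's condition, from splitting `S` along the bipartition. -/
lemma card_le_card_openNbhd [Fintype V] [DecidableEq V] [DecidableRel G.Adj]
    (hiso : ∀ v : V, ∃ u, G.Adj u v) {A : Finset V} (hA : IsIndepFinset G A)
    (hAc : IsIndepFinset G Aᶜ) (hγ : 2 * domNum G = Fintype.card V) (S : Finset V) :
    #S ≤ #(openNbhd G S) := by
  have hSA : S ∩ A ⊆ A := inter_subset_right
  have hSAc : S \ A ⊆ Aᶜ := fun v hv => mem_compl.2 (mem_sdiff.1 hv).2
  have hAcc : IsIndepFinset G Aᶜᶜ := by rwa [compl_compl]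
  have hdisj : Disjoint (openNbhd G (S ∩ A)) (openNbhd G (S \ A)) :=
    disjoint_compl_left.mono (openNbhd_subset_compl hA hSA)
      ((openNbhd_subset_compl hAc hSAc).trans (compl_compl A).le)
  have hunion : #(openNbhd G (S ∩ A)) + #(openNbhd G (S \ A)) ≤ #(openNbhd G S) := by
    rw [← card_union_of_disjoint hdisj]
    exact card_le_card (union_subset (openNbhd_mono inter_subset_left)
      (openNbhd_mono sdiff_subset))
  have := domNum_add_card_le hiso hAc hSA
  have := domNum_add_card_le hiso hAcc hSAc
  have := card_add_card_compl A
  have := card_inter_add_card_sdiff S A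
  omega

lemma exists_involutive_adj_of_injective [Fintype V] [DecidableEq V] {A : Finset V}
    (hA : IsIndepFinset G A) (hAc : IsIndepFinset G Aᶜ) {f : V → V} (hf : Injective f)
    (hadj : ∀ v, G.Adj v (f v)) : ∃ σ : V → V, Involutive σ ∧ ∀ v, G.Adj v (σ v) := by
  let e := Equiv.ofBijective f hf.bijective_of_finite
  have he : ∀ v, G.Adj (e.symm v) v := fun v => by
    simpa only [show f (e.symm v) = v from e.apply_symm_apply v] using hadj (e.symm v)
  refine ⟨fun v => if v ∈ A then e v else e.symm v, fun v => ?_, fun v => ?_⟩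
  · by_cases hv : v ∈ A
    · have : e v ∉ A := (mem_iff_notMem_of_adj hA hAc (hadj v)).1 hv
      simp [hv, this]
    · have : e.symm v ∈ A := (mem_iff_notMem_of_adj hA hAc (he v)).2 hv
      simp [hv, this]
  · by_cases hv : v ∈ A
    · simp only [hv, if_true]
      exact hadj v
    · simp only [hv, if_false]
      exact (he v).symm

/-- A perfect matching, encoded as an involution along edges, by Hall's theorem. -/
lemma exists_involutive_adj [Fintype V] [DecidableEq V] [DecidableRel G.Adj]
    (hiso : ∀ v : V, ∃ u, G.Adj u v) {A : Finset V} (hA : IsIndepFinset G A)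
    (hAc : IsIndepFinset G Aᶜ) (hγ : 2 * domNum G = Fintype.card V) :
    ∃ σ : V → V, Involutive σ ∧ ∀ v, G.Adj v (σ v) := by
  obtain ⟨f, hf, hadj⟩ := (Fintype.all_card_le_filter_rel_iff_exists_injective G.Adj).1
    (card_le_card_openNbhd hiso hA hAc hγ)
  exact exists_involutive_adj_of_injective hA hAc hf hadj

section Eternal

def IsTransversal (σ : V → V) (D : Finset V) : Prop :=
  ∀ v, v ∈ D ↔ σ v ∉ D

lemma exists_isTransversal [Fintype V] {σ : V → V} (hσ : Involutive σ) (hfix : ∀ v, σ v ≠ v) :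
    ∃ D, IsTransversal σ D := by
  let e := Fintype.equivFin V
  refine ⟨univ.filter fun v => e v < e (σ v), fun v => ?_⟩
  have : e v ≠ e (σ v) := e.injective.ne (hfix v).symm
  simp only [mem_filter, mem_univ, true_and, hσ v]
  omega

variable [DecidableEq V]

lemma IsTransversal.two_mul_card [Fintype V] {σ : V → V} (hσ : Involutive σ) {D : Finset V}
    (hD : IsTransversal σ D) : 2 * #D = Fintype.card V := by
  have himage : D.image σ = Dᶜ := by
    ext v
    rw [mem_compl, hD v, not_not, mem_image]
    exact ⟨fun ⟨a, ha, hav⟩ => hav ▸ (hσ a).symm ▸ ha, fun h => ⟨σ v, h, hσ v⟩⟩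
  rw [← card_add_card_compl D, ← himage, card_image_of_injective _ hσ.injective, two_mul]

lemma IsTransversal.insert_erase {σ : V → V} (hσ : Involutive σ) (hfix : ∀ v, σ v ≠ v)
    {D : Finset V} (hD : IsTransversal σ D) (r : V) :
    IsTransversal σ (insert r (D.erase (σ r))) := by
  intro v
  simp only [mem_insert, mem_erase]
  grind [hσ v, hσ r, hfix v, hfix r, hD v, hD r]

lemma isEternalGuardFamily_isTransversal [Fintype V] {σ : V → V} (hσ : Involutive σ)
    (hadj : ∀ v, G.Adj v (σ v)) {k : ℕ} (hk : 2 * k = Fintype.card V) :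
    IsEternalGuardFamily G k {D | IsTransversal σ D} := by
  have hfix : ∀ v, σ v ≠ v := fun v => (hadj v).ne.symm
  refine ⟨exists_isTransversal hσ hfix,
    fun D hD => ⟨fun v hv => ⟨σ v, ?_, (hadj v).symm⟩, ?_⟩, fun D hD r hr => ?_⟩
  · exact not_not.1 ((hD v).not.1 hv)
  · have := hD.two_mul_card hσ
    omega
  · exact ⟨σ r, not_not.1 ((hD r).not.1 hr), (hadj r).symm, hD.insert_erase hσ hfix r⟩

lemma exists_subset_mem_of_isIndepFinset {k : ℕ} {F : Set (Finset V)}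
    (hF : IsEternalGuardFamily G k F) {S : Finset V} (hS : IsIndepFinset G S) :
    ∃ D ∈ F, S ⊆ D := by
  obtain ⟨hne, -, hmove⟩ := hF
  induction S using Finset.induction_on with
  | empty => exact ⟨_, hne.some_mem, empty_subset _⟩
  | insert r T hrT ih =>
    obtain ⟨D, hD, hTD⟩ := ih (hS.subset (subset_insert r T))
    by_cases hrD : r ∈ D
    · exact ⟨D, hD, insert_subset hrD hTD⟩
    obtain ⟨v, hvD, hvr, hD'⟩ := hmove D hD r hrD
    -- the guard moving to `r` is its neighbour, so it does not stand on `T`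
    have hvT : v ∉ T := fun hvT => hS.not_adj (mem_insert_of_mem hvT) (mem_insert_self r T) hvr
    refine ⟨_, hD', insert_subset_insert r fun x hx => mem_erase.2 ⟨?_, hTD hx⟩⟩
    rintro rfl
    exact hvT hx

lemma isEternalGuardFamily_univ [Fintype V] :
    IsEternalGuardFamily G (Fintype.card V) {univ} :=
  ⟨Set.singleton_nonempty _, by simp [Dominates], by simp⟩

lemma exists_isEternalGuardFamily_eternalDomNum [Fintype V] [Nonempty V] :
    ∃ F, IsEternalGuardFamily G (eternalDomNum G) F :=
  (Nat.sInf_mem (s := {k | 1 ≤ k ∧ ∃ F, IsEternalGuardFamily G k F})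
    ⟨_, Fintype.card_pos, _, isEternalGuardFamily_univ⟩).2

lemma eternalDomNum_le {k : ℕ} {F : Set (Finset V)} (hF : IsEternalGuardFamily G k F) :
    eternalDomNum G ≤ k := by
  rcases k.eq_zero_or_pos with rfl | hk
  · obtain ⟨⟨D, hD⟩, hdom, -⟩ := hF
    obtain ⟨hDdom, hDcard⟩ := hdom D hD
    have : IsEmpty V := dominates_empty_iff.1 (card_eq_zero.1 hDcard ▸ hDdom)
    refine (Nat.sInf_eq_zero.2 (Or.inr (Set.eq_empty_of_forall_notMem ?_))).le
    rintro k' ⟨hk', F', ⟨D', hD'⟩, hdom', -⟩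
    have := (hdom' D' hD').2
    rw [eq_empty_of_isEmpty D', card_empty] at this
    omega
  · exact Nat.sInf_le ⟨hk, F, hF⟩

lemma domNum_le_eternalDomNum [Fintype V] : domNum G ≤ eternalDomNum G := by
  rcases isEmpty_or_nonempty V with hV | hV
  · exact (domNum_le (dominates_empty_iff.2 hV)).trans (card_empty.trans_le (Nat.zero_le _))
  · obtain ⟨F, ⟨D, hD⟩, hdom, -⟩ := exists_isEternalGuardFamily_eternalDomNum (G := G)
    exact (domNum_le (hdom D hD).1).trans_eq (hdom D hD).2

lemma card_le_eternalDomNum_of_isIndepFinset [Fintype V] {S : Finset V}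
    (hS : IsIndepFinset G S) : #S ≤ eternalDomNum G := by
  rcases isEmpty_or_nonempty V with hV | hV
  · simp [eq_empty_of_isEmpty S]
  · obtain ⟨F, hF⟩ := exists_isEternalGuardFamily_eternalDomNum (G := G)
    obtain ⟨D, hD, hSD⟩ := exists_subset_mem_of_isIndepFinset hF hS
    exact (card_le_card hSD).trans_eq (hF.2.1 D hD).2

end Eternal

/-- for a bipartite graph `G` without isolated vertices on `n` vertices,
`γ(G) = γ^∞(G)` if and only if `γ(G) = n/2` (i.e. `2·γ(G) = n`). -/
theorem stmt7 [Fintype V] [DecidableEq V] (G : SimpleGraph V)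
    (hbip : G.Colorable 2) (hiso : ∀ v : V, ∃ u, G.Adj u v) :
    domNum G = eternalDomNum G ↔ 2 * domNum G = Fintype.card V := by
  classical
  obtain ⟨A, hA, hAc⟩ := exists_isIndepFinset_and_compl hbip
  have hcard := card_add_card_compl A
  have := domNum_le_card hiso hAc
  have := domNum_le_card hiso (by rwa [compl_compl] : IsIndepFinset G Aᶜᶜ)
  constructor
  · intro h
    have := card_le_eternalDomNum_of_isIndepFinset hA
    have := card_le_eternalDomNum_of_isIndepFinset hAc
    omega
  · intro h
    obtain ⟨σ, hσ, hadj⟩ := exists_involutive_adj hiso hA hAc h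
    exact le_antisymm domNum_le_eternalDomNum
      (eternalDomNum_le (isEternalGuardFamily_isTransversal hσ hadj h))
end
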